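/- If f is a total Boolean function, then RS_u(f) = RS(f). That is, for total functions the sabotage problem restricted to inputs with exactly one sabotaged entry is exactly as hard as the general sabotage problem. -/

import Mathlib

/-! ### Decision trees -/

/-- A deterministic decision tree querying positions of type `ι`, receiving answers
in `α`, and producing an output in `β`. -/
inductive DTree (ι α β : Type) : Type
  | leaf (b : β) : DTree ι α β
  | node (i : ι) (next : α → DTree ι α β) : DTree ι α β

namespace DTree

variable {ι α β : Type}

/-- The output of a decision tree on input `x`. -/
def output : DTree ι α β → (ι → α) → β
  | leaf b, _ => b
  | node i next, x => (next (x i)).output x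

/-- The number of queries made by a decision tree on input `x`. -/
def cost : DTree ι α β → (ι → α) → ℕ
  | leaf _, _ => 0
  | node i next, x => (next (x i)).cost x + 1

/-- The set of positions queried by a decision tree on input `x`. -/
def queries : DTree ι α β → (ι → α) → Set ι
  | leaf _, _ => ∅
  | node i next, x => insert i ((next (x i)).queries x)

end DTree

/-- A partial function on inputs `ι → α` with outputs in `β`; `none` means undefined
(the domain is the set of inputs mapped to `some` value). -/
abbrev PFn (ι α β : Type) := (ι → α) → Option β

/-- `t` computes the partial function `f` (correct on every input of the domain). -/
def DTree.computesP {ι α β : Type} (t : DTree ι α β) (f : PFn ι α β) : Prop :=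
  ∀ x b, f x = some b → t.output x = b

/-- Deterministic query complexity `D(f)`. -/
noncomputable def Dq {ι α β : Type} (f : PFn ι α β) : ℝ :=
  sInf {T : ℝ | 0 ≤ T ∧ ∃ t : DTree ι α β, t.computesP f ∧ ∀ x, (t.cost x : ℝ) ≤ T}

/-! ### Randomized query algorithms -/

/-- A randomized query algorithm: a finitely supported probability distribution over
deterministic decision trees. -/
structure RandAlg (ι α β : Type) where
  Ω : Type
  [fin : Fintype Ω]
  p : Ω → ℝ
  nonneg : ∀ ω, 0 ≤ p ω
  sum_one : ∑ ω, p ω = 1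
  tree : Ω → DTree ι α β

namespace RandAlg

variable {ι α β : Type}

/-- Expected number of queries of `A` on input `x`. -/
noncomputable def expCost (A : RandAlg ι α β) (x : ι → α) : ℝ :=
  letI := A.fin
  ∑ ω, A.p ω * ((A.tree ω).cost x : ℝ)

open Classical in
/-- Probability that `A` outputs `b` on input `x`. -/
noncomputable def succProb (A : RandAlg ι α β) (x : ι → α) (b : β) : ℝ :=
  letI := A.fin
  ∑ ω, if (A.tree ω).output x = b then A.p ω else 0

/-- `A` computes `f` with error at most `ε`: on every input of the domain the correct
output is produced with probability at least `1 - ε`. -/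
def Computes (A : RandAlg ι α β) (f : PFn ι α β) (ε : ℝ) : Prop :=
  ∀ x b, f x = some b → 1 - ε ≤ A.succProb x b

/-- The worst-case cost of `A` (over all inputs and all trees in the support) is at most `T`. -/
def WCostLe (A : RandAlg ι α β) (T : ℝ) : Prop :=
  ∀ ω, A.p ω ≠ 0 → ∀ x, ((A.tree ω).cost x : ℝ) ≤ T

/-- The expected cost of `A` on every input of the domain of `f` is at most `T`. -/
def ECostLe (A : RandAlg ι α β) (f : PFn ι α β) (T : ℝ) : Prop :=
  ∀ x, (f x).isSome → A.expCost x ≤ T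

end RandAlg

/-- `R_ε(f)`: minimum worst-case cost of an `ε`-error randomized algorithm for `f`. -/
noncomputable def Rw {ι α β : Type} (ε : ℝ) (f : PFn ι α β) : ℝ :=
  sInf {T : ℝ | 0 ≤ T ∧ ∃ A : RandAlg ι α β, A.Computes f ε ∧ A.WCostLe T}

/-- `R̄_ε(f)`: minimum expected cost of an `ε`-error randomized algorithm for `f`. -/
noncomputable def Rbar {ι α β : Type} (ε : ℝ) (f : PFn ι α β) : ℝ :=
  sInf {T : ℝ | 0 ≤ T ∧ ∃ A : RandAlg ι α β, A.Computes f ε ∧ A.ECostLe f T}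

/-- `R₀(f)`: zero-error expected randomized query complexity. -/
noncomputable def R0 {ι α β : Type} (f : PFn ι α β) : ℝ := Rbar 0 f

/-- `R(f) := R_{1/3}(f)`: bounded-error randomized query complexity. -/
noncomputable def Rb {ι α β : Type} (f : PFn ι α β) : ℝ := Rw (1/3) f

/-- The total function `f` viewed as a partial function. -/
def tot {ι α β : Type} (f : (ι → α) → β) : PFn ι α β := fun x => some (f x)


/-! ### Sabotage complexity and composition -/

/-- The four-letter alphabet `{0, 1, *, †}` of sabotaged inputs. -/
inductive Sab : Type
  | zero : Sab
  | one : Sab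
  | star : Sab
  | dagger : Sab
deriving DecidableEq

/-- Embedding of Boolean values into the sabotage alphabet. -/
def Sab.ofBool : Bool → Sab
  | false => Sab.zero
  | true => Sab.one

/-- `p` is consistent with the Boolean input `x`: wherever `p` has a Boolean entry,
it agrees with `x`. -/
def SabConsistent {ι : Type} (p : ι → Sab) (x : ι → Bool) : Prop :=
  ∀ i, p i = Sab.ofBool (x i) ∨ p i = Sab.star ∨ p i = Sab.dagger

/-- `p` is a sabotaged input for `f` using the sabotage symbol `s`: all entries of `p`
lie in `{0, 1, s}` and `p` is consistent with both a `0`-input and a `1`-input of `f`. -/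
def IsSabotaged {ι : Type} (f : PFn ι Bool Bool) (s : Sab) (p : ι → Sab) : Prop :=
  (∀ i, p i = Sab.zero ∨ p i = Sab.one ∨ p i = s) ∧
  ∃ x y, (f x).isSome ∧ (f y).isSome ∧ f x ≠ f y ∧ SabConsistent p x ∧ SabConsistent p y

open Classical in
/-- The sabotage problem `f_sab` associated with `f`: it is `0` on `P_f` (inputs
sabotaged with `*`) and `1` on `P_f†` (inputs sabotaged with `†`). -/
noncomputable def fsab {ι : Type} (f : PFn ι Bool Bool) : PFn ι Sab Bool :=
  fun p =>
    if IsSabotaged f Sab.star p then some false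
    else if IsSabotaged f Sab.dagger p then some true
    else none

open Classical in
/-- `f_usab`: the restriction of `f_sab` to inputs having exactly one `*` or `†` entry. -/
noncomputable def fusab {ι : Type} (f : PFn ι Bool Bool) : PFn ι Sab Bool :=
  fun p =>
    if ∃! i, p i = Sab.star ∨ p i = Sab.dagger then fsab f p else none

/-- Randomized sabotage complexity `RS(f) := R₀(f_sab)`. -/
noncomputable def RS {ι : Type} (f : PFn ι Bool Bool) : ℝ := R0 (fsab f)

/-- `RS_u(f) := R₀(f_usab)` (this is `0` automatically when `f_usab` has empty domain). -/
noncomputable def RSu {ι : Type} (f : PFn ι Bool Bool) : ℝ := R0 (fusab f)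

open Classical in
/-- Composition `f ∘ g` of partial functions: defined on an input exactly when every
inner copy of `g` is defined and the tuple of inner values lies in the domain of `f`. -/
noncomputable def pcomp {κ ι α β γ : Type} (f : PFn κ β γ) (g : PFn ι α β) :
    PFn (κ × ι) α γ :=
  fun x =>
    if h : ∀ i : κ, (g fun j => x (i, j)).isSome then
      f fun i => (g fun j => x (i, j)).get (h i)
    else none

/-- Index types for iterated self-composition. -/
def IterIdx (κ : Type) : ℕ → Type
  | 0 => κ
  | n + 1 => κ × IterIdx κ n

/-- `iterComp f n` is `f` composed with itself `n + 1` times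
(`iterComp f 0 = f`, `iterComp f (n+1) = f ∘ iterComp f n`). -/
noncomputable def iterComp {κ : Type} (f : PFn κ Bool Bool) : (n : ℕ) → PFn (IterIdx κ n) Bool Bool
  | 0 => f
  | n + 1 => pcomp f (iterComp f n)

/-! ### The index function -/

/-- The value of a bit-string read as a binary number (bit `i` has weight `2^i`). -/
def binval {b : ℕ} (x : Fin b → Bool) : ℕ := ∑ i, if x i then 2 ^ (i : ℕ) else 0

theorem sum_range_two_pow (b : ℕ) : ∑ i ∈ Finset.range b, 2 ^ i = 2 ^ b - 1 := by
  induction b with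
  | zero => simp
  | succ n ih =>
    rw [Finset.sum_range_succ, ih, pow_succ]
    have : 1 ≤ 2 ^ n := Nat.one_le_two_pow
    omega

theorem binval_lt {b : ℕ} (x : Fin b → Bool) : binval x < 2 ^ b := by
  have h1 : binval x ≤ ∑ i : Fin b, 2 ^ (i : ℕ) := by
    refine Finset.sum_le_sum fun i _ => ?_
    split <;> simp
  have h2 : ∑ i : Fin b, 2 ^ (i : ℕ) = 2 ^ b - 1 := by
    rw [Fin.sum_univ_eq_sum_range (fun i => 2 ^ i) b]
    exact sum_range_two_pow b
  have h3 : 0 < 2 ^ b := Nat.pow_pos (by norm_num)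
  omega

/-- The largest `c` with `c + 2^c ≤ m`. -/
def indexC (m : ℕ) : ℕ := Nat.findGreatest (fun c => c + 2 ^ c ≤ m) m

/-- The index function `Ind_m : {0,1}^m → {0,1}`: the first `c` bits (where `c` is the
largest integer with `c + 2^c ≤ m`) are read as a binary address `y` into the next
`2^c` bits, and the output is the addressed bit. -/
def IndFn (m : ℕ) : PFn (Fin m) Bool Bool :=
  fun x =>
    let c := indexC m
    let y := ∑ i : Fin m, if (i : ℕ) < c ∧ x i = true then 2 ^ (i : ℕ) else 0
    if h : c + y < m then some (x ⟨c + y, h⟩) else none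

/-- `f^{⊕c}_ind`: the index function on `c + 2^c` bits with `f` composed into each of
the `c` address bits only. -/
def findex {n : ℕ} (f : PFn (Fin n) Bool Bool) (c : ℕ) :
    PFn ((Fin c × Fin n) ⊕ Fin (2 ^ c)) Bool Bool :=
  fun x =>
    if h : ∀ i : Fin c, (f fun j => x (Sum.inl (i, j))).isSome then
      some (x (Sum.inr ⟨binval fun i => (f fun j => x (Sum.inl (i, j))).get (h i),
        binval_lt _⟩))
    else none


/-!
An algorithm for `f_usab` becomes one for `f_sab` once every tree is cut off at the first
sabotaged entry it reads. Given `p` in the domain of `f_sab`, consistent with inputs `x`, `y`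
with `f x ≠ f y`, walking from `x` to `y` through the sabotaged coordinates of `p` yields a
sensitive edge `z`, `z[i ↦ a]` of `f` with `p i` sabotaged. Writing `*` or `†` at `i` on `z`
gives two singly-sabotaged inputs `q`, `q'` with different answers, both agreeing with `p` on
its Boolean entries. A zero-error tree separates `q` from `q'`, so it queries `i` on `q`; run
on `p`, it follows its path on `q` until it meets a sabotaged entry, no later than at `i`.
Hence the cut-off tree answers `p` correctly at no more than its cost on `q`.
-/

open Function

namespace DTree

variable {ι α β : Type}

theorem output_eq_of_eqOn_queries (t : DTree ι α β) {x y : ι → α}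
    (h : ∀ i ∈ t.queries x, y i = x i) : t.output y = t.output x := by
  induction t with
  | leaf b => rfl
  | node i next ih =>
    have hi : y i = x i := h i (Set.mem_insert i _)
    simp only [output, hi]
    exact ih (x i) fun j hj => h j (Set.mem_insert_of_mem i hj)

theorem mem_queries_of_output_update_ne [DecidableEq ι] (t : DTree ι α β) {x : ι → α}
    {i : ι} {a : α} (h : t.output (update x i a) ≠ t.output x) : i ∈ t.queries x := by
  by_contra hi
  exact h (t.output_eq_of_eqOn_queries fun j hj => update_of_ne (ne_of_mem_of_not_mem hj hi) a x)

def cutoff (halt : α → Option β) : DTree ι α β → DTree ι α β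
  | leaf b => leaf b
  | node i next => node i fun a => (halt a).elim ((next a).cutoff halt) leaf

variable {halt : α → Option β} {x y : ι → α}

theorem cost_cutoff_le (hxy : ∀ i, halt (x i) = none → y i = x i) (t : DTree ι α β) :
    (t.cutoff halt).cost x ≤ t.cost y := by
  induction t with
  | leaf b => simp [cutoff, cost]
  | node i next ih =>
    cases h : halt (x i) with
    | none => simpa [cutoff, cost, h, hxy i h] using ih (x i)
    | some c => simp [cutoff, cost, h]

theorem output_cutoff {b : β} (hxy : ∀ i, halt (x i) = none → y i = x i)
    (hb : ∀ i c, halt (x i) = some c → c = b) (t : DTree ι α β)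
    (ht : ∃ i ∈ t.queries y, (halt (x i)).isSome) : (t.cutoff halt).output x = b := by
  induction t with
  | leaf b => simp [queries] at ht
  | node i next ih =>
    cases h : halt (x i) with
    | none =>
      simp only [cutoff, output, h, Option.elim]
      obtain ⟨j, hj, hjs⟩ := ht
      rcases Set.mem_insert_iff.1 hj with rfl | hj
      · simp [h] at hjs
      · exact ih (x i) ⟨j, hxy i h ▸ hj, hjs⟩
    | some c => simpa [cutoff, output, h] using hb i c h

end DTree

namespace RandAlg

variable {ι α β : Type}

theorem output_eq_of_computes_zero (A : RandAlg ι α β) {f : PFn ι α β} (hA : A.Computes f 0)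
    {x : ι → α} {b : β} (hx : f x = some b) {ω : A.Ω} (hω : A.p ω ≠ 0) :
    (A.tree ω).output x = b := by
  let _ := A.fin
  by_contra hne
  have hlt : A.succProb x b < 1 := by
    rw [← A.sum_one, succProb]
    refine Finset.sum_lt_sum (fun ω' _ => ?_) ⟨ω, Finset.mem_univ _, ?_⟩
    · split_ifs
      exacts [le_rfl, A.nonneg ω']
    · rw [if_neg hne]
      exact (A.nonneg ω).lt_of_ne' hω
  linarith [hA x b hx]

theorem succProb_eq_one (A : RandAlg ι α β) {x : ι → α} {b : β}
    (h : ∀ ω, A.p ω ≠ 0 → (A.tree ω).output x = b) : A.succProb x b = 1 := by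
  rw [← A.sum_one, succProb]
  refine Finset.sum_congr rfl fun ω _ => ?_
  by_cases hω : A.p ω = 0
  · simp [hω]
  · rw [if_pos (h ω hω)]

def mapTree {ι' α' : Type} (A : RandAlg ι α β) (φ : DTree ι α β → DTree ι' α' β) :
    RandAlg ι' α' β :=
  { A with tree := φ ∘ A.tree }

end RandAlg

def QueryReduction {ι α ι' α' β : Type} (φ : DTree ι α β → DTree ι' α' β)
    (g : PFn ι' α' β) (f : PFn ι α β) : Prop :=
  ∀ x b, g x = some b → ∃ y, (f y).isSome ∧
    ∀ t : DTree ι α β, t.computesP f → (φ t).output x = b ∧ (φ t).cost x ≤ t.cost y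

theorem QueryReduction.exists_zeroError {ι α ι' α' β : Type}
    {φ : DTree ι α β → DTree ι' α' β} {g : PFn ι' α' β} {f : PFn ι α β}
    (hφ : QueryReduction φ g f) {A : RandAlg ι α β} {T : ℝ} (hA : A.Computes f 0)
    (hT : A.ECostLe f T) : ∃ B : RandAlg ι' α' β, B.Computes g 0 ∧ B.ECostLe g T := by
  have hcomp : ∀ ω, A.p ω ≠ 0 → (A.tree ω).computesP f :=
    fun ω hω _ _ hx => A.output_eq_of_computes_zero hA hx hω
  refine ⟨A.mapTree φ, fun x b hx => ?_, fun x hx => ?_⟩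
  · obtain ⟨y, -, hy⟩ := hφ x b hx
    rw [(A.mapTree φ).succProb_eq_one fun ω hω => (hy _ (hcomp ω hω)).1]
    norm_num
  · obtain ⟨b, hb⟩ := Option.isSome_iff_exists.mp hx
    obtain ⟨y, hyf, hy⟩ := hφ x b hb
    have hle : ∀ ω, A.p ω * ((φ (A.tree ω)).cost x : ℝ) ≤ A.p ω * ((A.tree ω).cost y : ℝ) := by
      intro ω
      by_cases hω : A.p ω = 0
      · simp [hω]
      · exact mul_le_mul_of_nonneg_left (by exact_mod_cast (hy _ (hcomp ω hω)).2) (A.nonneg ω)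
    calc (A.mapTree φ).expCost x ≤ A.expCost y := Finset.sum_le_sum fun ω _ => hle ω
      _ ≤ T := hT y hyf

namespace Sab

/-- The value of `f_sab` on inputs sabotaged with `s`. -/
def sabotageValue : Sab → Option Bool
  | zero => none
  | one => none
  | star => some false
  | dagger => some true

theorem ofBool_injective : Injective ofBool := by
  intro a b h
  cases a <;> cases b <;> simp_all [ofBool]

theorem exists_sabotageValue_eq (b : Bool) : ∃ s : Sab, s.sabotageValue = some b := by
  cases b
  exacts [⟨star, rfl⟩, ⟨dagger, rfl⟩]

end Sab

open Sab

variable {ι : Type}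

theorem SabConsistent.eq_ofBool {p : ι → Sab} {x : ι → Bool} (h : SabConsistent p x) {i : ι}
    (hi : (p i).sabotageValue = none) : p i = ofBool (x i) := by
  rcases h i with h | h | h <;> simp_all [sabotageValue]

theorem sabConsistent_update_ofBool [DecidableEq ι] {z w : ι → Bool} {i : ι} {s : Sab}
    {b : Bool} (hs : s.sabotageValue = some b) (hw : ∀ j ≠ i, w j = z j) :
    SabConsistent (update (ofBool ∘ z) i s) w := by
  intro j
  by_cases hj : j = i
  · subst hj
    cases s <;> simp_all [sabotageValue]
  · simp [update_of_ne hj, hw j hj]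

theorem isSabotaged_update_ofBool [DecidableEq ι] {f : (ι → Bool) → Bool} {z : ι → Bool}
    {i : ι} {a : Bool} {s : Sab} {b : Bool} (hs : s.sabotageValue = some b)
    (hz : f z ≠ f (update z i a)) : IsSabotaged (tot f) s (update (ofBool ∘ z) i s) := by
  refine ⟨fun j => ?_, z, update z i a, rfl, rfl, by simpa [tot] using hz,
    sabConsistent_update_ofBool hs fun _ _ => rfl,
    sabConsistent_update_ofBool hs fun j hj => update_of_ne hj _ _⟩
  by_cases hj : j = i
  · simp [hj]
  · cases h : z j <;> simp [update_of_ne hj, h, ofBool]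

theorem exists_isSabotaged_of_fsab_eq_some {F : PFn ι Bool Bool} {p : ι → Sab} {b : Bool}
    (h : fsab F p = some b) : ∃ s : Sab, s.sabotageValue = some b ∧ IsSabotaged F s p := by
  unfold fsab at h
  split_ifs at h with h₁ h₂
  · exact ⟨star, h, h₁⟩
  · exact ⟨dagger, h, h₂⟩

theorem eq_of_fsab_eq_some {F : PFn ι Bool Bool} {p : ι → Sab} {b : Bool}
    (h : fsab F p = some b) {i : ι} {c : Bool} (hc : (p i).sabotageValue = some c) : c = b := by
  obtain ⟨s, hs, hsab, -⟩ := exists_isSabotaged_of_fsab_eq_some h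
  rcases hsab i with h | h | h <;> rw [h] at hc
  · simp [sabotageValue] at hc
  · simp [sabotageValue] at hc
  · exact Option.some_injective _ (hc.symm.trans hs)

theorem fsab_eq_of_isSabotaged {F : PFn ι Bool Bool} {p : ι → Sab} {s : Sab} {b : Bool}
    {i : ι} (h : IsSabotaged F s p) (hs : s.sabotageValue = some b) (hi : p i = s) :
    fsab F p = some b := by
  cases s <;> simp only [sabotageValue, reduceCtorEq, Option.some.injEq] at hs <;> subst hs
  · simp [fsab, h]
  · have hstar : ¬ IsSabotaged F star p := fun h' => by
      rcases h'.1 i with h' | h' | h' <;> simp [hi] at h'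
    simp [fsab, hstar, h]

theorem fsab_eq_some_of_fusab_eq_some {F : PFn ι Bool Bool} {p : ι → Sab} {b : Bool}
    (h : fusab F p = some b) : fsab F p = some b := by
  unfold fusab at h
  split_ifs at h
  exact h

theorem fusab_tot_update_ofBool [DecidableEq ι] {f : (ι → Bool) → Bool} {z : ι → Bool}
    {i : ι} {a : Bool} {s : Sab} {b : Bool} (hs : s.sabotageValue = some b)
    (hz : f z ≠ f (update z i a)) : fusab (tot f) (update (ofBool ∘ z) i s) = some b := by
  have huniq : ∃! j, update (ofBool ∘ z) i s j = star ∨ update (ofBool ∘ z) i s j = dagger := by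
    refine ⟨i, by cases s <;> simp_all [sabotageValue], fun j hj => ?_⟩
    by_contra hji
    cases h : z j <;> simp [update_of_ne hji, h, ofBool] at hj
  unfold fusab
  rw [if_pos huniq]
  exact fsab_eq_of_isSabotaged (isSabotaged_update_ofBool hs hz) hs (update_self _ _ _)

theorem exists_ne_update_of_ne [DecidableEq ι] {α γ : Type} (f : (ι → α) → γ) {x y : ι → α}
    (D : Finset ι) (hD : ∀ j ∉ D, x j = y j) (hxy : f x ≠ f y) :
    ∃ z, ∃ i ∈ D, (∀ j ∉ D, z j = x j) ∧ f z ≠ f (update z i (y i)) := by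
  induction D using Finset.induction_on generalizing x with
  | empty => exact absurd (congrArg f (funext fun j => hD j (Finset.notMem_empty j))) hxy
  | insert a D _ ih =>
    by_cases hx : f x = f (update x a (y a))
    · have hD' : ∀ j ∉ D, update x a (y a) j = y j := by
        intro j hj
        by_cases hja : j = a
        · simp [hja]
        · rw [update_of_ne hja]
          exact hD j (by simp [hja, hj])
      obtain ⟨z, i, hi, hz, hne⟩ := ih hD' (hx ▸ hxy)
      refine ⟨z, i, Finset.mem_insert_of_mem hi, fun j hj => ?_, hne⟩
      rw [hz j fun h => hj (Finset.mem_insert_of_mem h), update_of_ne]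
      exact fun h => hj (h ▸ Finset.mem_insert_self a D)
    · exact ⟨x, a, Finset.mem_insert_self a D, fun _ _ => rfl, hx⟩

theorem exists_fusab_pair_of_fsab [Fintype ι] [DecidableEq ι] {f : (ι → Bool) → Bool}
    {p : ι → Sab} {b : Bool} (hp : fsab (tot f) p = some b) :
    ∃ q i s, (∀ j, (p j).sabotageValue = none → q j = p j) ∧ (p i).sabotageValue.isSome ∧
      fusab (tot f) q = some b ∧ fusab (tot f) (update q i s) = some !b := by
  obtain ⟨-, -, -, x, y, -, -, hxy, hx, hy⟩ := exists_isSabotaged_of_fsab_eq_some hp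
  set D := Finset.univ.filter fun j => (p j).sabotageValue.isSome
  have hD : ∀ j ∉ D, x j = y j := fun j hj => by
    have hj : (p j).sabotageValue = none := by simpa [D] using hj
    exact ofBool_injective ((hx.eq_ofBool hj).symm.trans (hy.eq_ofBool hj))
  obtain ⟨z, i, hi, hzx, hz⟩ := exists_ne_update_of_ne f D hD fun h => hxy (by simp [tot, h])
  obtain ⟨s, hs⟩ := Sab.exists_sabotageValue_eq b
  obtain ⟨s', hs'⟩ := Sab.exists_sabotageValue_eq (!b)
  refine ⟨update (ofBool ∘ z) i s, i, s', fun j hj => ?_, (Finset.mem_filter.1 hi).2,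
    fusab_tot_update_ofBool hs hz, by rw [update_idem]; exact fusab_tot_update_ofBool hs' hz⟩
  have hjD : j ∉ D := by simp [D, hj]
  rw [update_of_ne (ne_of_mem_of_not_mem hi hjD).symm, comp_apply, hzx j hjD, hx.eq_ofBool hj]

theorem queryReduction_id_fusab_fsab (F : PFn ι Bool Bool) :
    QueryReduction id (fusab F) (fsab F) := fun p b hp =>
  have hp' := fsab_eq_some_of_fusab_eq_some hp
  ⟨p, by simp [hp'], fun t ht => ⟨ht p b hp', le_rfl⟩⟩

theorem queryReduction_cutoff_fsab_fusab [Fintype ι] (f : (ι → Bool) → Bool) :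
    QueryReduction (DTree.cutoff sabotageValue) (fsab (tot f)) (fusab (tot f)) := by
  classical
  intro p b hp
  obtain ⟨q, i, s, hqp, hi, hq, hq'⟩ := exists_fusab_pair_of_fsab hp
  have hiq : ∀ t : DTree ι Sab Bool, t.computesP (fusab (tot f)) → i ∈ t.queries q :=
    fun t ht => t.mem_queries_of_output_update_ne (by rw [ht _ _ hq, ht _ _ hq']; simp)
  refine ⟨q, by simp [hq], fun t ht => ⟨?_, t.cost_cutoff_le hqp⟩⟩
  exact t.output_cutoff hqp (fun j c hc => eq_of_fsab_eq_some hp hc) ⟨i, hiq t ht, hi⟩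

/-- **For total functions, one sabotaged entry suffices:** `RS_u(f) = RS(f)` for every
total Boolean function `f`. -/
theorem RSu_eq_RS_of_total {n : ℕ} (f : (Fin n → Bool) → Bool) :
    RSu (tot f) = RS (tot f) := by
  unfold RSu RS R0 Rbar
  congr 1
  ext T
  refine and_congr_right fun _ => ⟨fun ⟨A, hA, hT⟩ => ?_, fun ⟨A, hA, hT⟩ => ?_⟩
  · exact (queryReduction_cutoff_fsab_fusab f).exists_zeroError hA hT
  · exact (queryReduction_id_fusab_fsab (tot f)).exists_zeroError hA hT
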